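/- The SPO loss equals the limit of the dual bound: ℓ_SPO(ĉ, c) = lim_{α → +∞} { ξ_S(c − αĉ) + α z*(ĉ) } − z*(c). -/

import Mathlib

open MeasureTheory Set

noncomputable section

/-- Dot product on `Fin d → ℝ`. -/
def dotp {d : ℕ} (c w : Fin d → ℝ) : ℝ := ∑ i, c i * w i

/-- Optimal value `z*(c) = min_{w ∈ S} cᵀw`. -/
def zS {d : ℕ} (S : Set (Fin d → ℝ)) (c : Fin d → ℝ) : ℝ := sInf ((fun w => dotp c w) '' S)

/-- Support function `ξ_S(c) = max_{w ∈ S} cᵀw`. -/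
def xiS {d : ℕ} (S : Set (Fin d → ℝ)) (c : Fin d → ℝ) : ℝ := sSup ((fun w => dotp c w) '' S)

/-- Optimal solution set `W*(c) = argmin_{w ∈ S} cᵀw`. -/
def WS {d : ℕ} (S : Set (Fin d → ℝ)) (c : Fin d → ℝ) : Set (Fin d → ℝ) :=
  {w | w ∈ S ∧ ∀ u ∈ S, dotp c w ≤ dotp c u}

/-- SPO loss `ℓ_SPO(ĉ, c) = max_{w ∈ W*(ĉ)} cᵀw − z*(c)`. -/
def lSPO {d : ℕ} (S : Set (Fin d → ℝ)) (chat c : Fin d → ℝ) : ℝ :=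
  sSup ((fun w => dotp c w) '' WS S chat) - zS S c

/-- SPO+ loss `ℓ_SPO+(ĉ, c) = ξ_S(c − 2ĉ) + 2ĉᵀw*(c) − z*(c)` given a selection `wstar`. -/
def lSPOp {d : ℕ} (S : Set (Fin d → ℝ)) (wstar : (Fin d → ℝ) → (Fin d → ℝ))
    (chat c : Fin d → ℝ) : ℝ :=
  xiS S (c - (2 : ℝ) • chat) + 2 * dotp chat (wstar c) - zS S c

/-!
`ξ_S(c − αĉ) + α z*(ĉ) = max_{w ∈ S} (cᵀw − α (ĉᵀw − z*(ĉ)))` is an exact penalty formulation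
of `max_{w ∈ W*(ĉ)} cᵀw`: the penalty `ĉᵀw − z*(ĉ)` is nonnegative on `S` and vanishes exactly
on `W*(ĉ)`. Evaluating at a point of `W*(ĉ)` bounds every penalised value from below by the
SPO value. Conversely, for any `b` above the SPO value, the compact set of points of `S` with
`cᵀw ≥ b` misses `W*(ĉ)`, so the penalty is bounded away from zero there and those points lose
once `α` is large.
-/

open Filter Topology

section Penalty

variable {X : Type*} [TopologicalSpace X] {S : Set X} {f g : X → ℝ}

theorem IsCompact.le_sSup_image_sub_mul_add_sInf (hS : IsCompact S) (hne : S.Nonempty)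
    (hf : Continuous f) (hg : Continuous g) (α : ℝ) :
    sSup (f '' {x | x ∈ S ∧ ∀ y ∈ S, g x ≤ g y}) ≤
      sSup ((fun x => f x - α * g x) '' S) + α * sInf (g '' S) := by
  obtain ⟨x₀, hx₀, hx₀min⟩ := hS.exists_isMinOn hne hg.continuousOn
  refine csSup_le ⟨f x₀, x₀, ⟨hx₀, fun y hy => hx₀min hy⟩, rfl⟩ ?_
  rintro _ ⟨x, ⟨hx, hxmin⟩, rfl⟩
  have hgx : sInf (g '' S) = g x :=
    le_antisymm (csInf_le (hS.bddBelow_image hg.continuousOn) ⟨x, hx, rfl⟩)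
      (le_csInf (hne.image g) (forall_mem_image.2 hxmin))
  have hle : f x - α * g x ≤ sSup ((fun x => f x - α * g x) '' S) :=
    le_csSup (hS.bddAbove_image (by fun_prop)) ⟨x, hx, rfl⟩
  rw [hgx]
  linarith

theorem IsCompact.eventually_sSup_image_sub_mul_add_sInf_lt (hS : IsCompact S) (hne : S.Nonempty)
    (hf : Continuous f) (hg : Continuous g) {b : ℝ}
    (hb : sSup (f '' {x | x ∈ S ∧ ∀ y ∈ S, g x ≤ g y}) < b) :
    ∀ᶠ α in atTop, sSup ((fun x => f x - α * g x) '' S) + α * sInf (g '' S) < b := by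
  set m := sInf (g '' S)
  have hm : ∀ x ∈ S, m ≤ g x := fun x hx =>
    csInf_le (hS.bddBelow_image hg.continuousOn) ⟨x, hx, rfl⟩
  obtain ⟨M, hM⟩ := hS.bddAbove_image hf.continuousOn
  have hgap : ∀ x ∈ S ∩ f ⁻¹' Ici b, m < g x := by
    rintro x ⟨hx, hfx⟩
    by_contra! hgx
    have hxmin : x ∈ {x | x ∈ S ∧ ∀ y ∈ S, g x ≤ g y} :=
      ⟨hx, fun y hy => hgx.trans (hm y hy)⟩
    have : f x ≤ sSup (f '' {x | x ∈ S ∧ ∀ y ∈ S, g x ≤ g y}) :=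
      le_csSup ((hS.bddAbove_image hf.continuousOn).mono (image_mono fun _ h => h.1))
        ⟨x, hxmin, rfl⟩
    exact absurd hfx (not_le.2 (this.trans_lt hb))
  obtain ⟨m', hmm', hm'⟩ :=
    (hS.inter_right (isClosed_Ici.preimage hf)).exists_forall_le' hg.continuousOn hgap
  filter_upwards [eventually_ge_atTop 0, eventually_gt_atTop ((M - b) / (m' - m))]
    with α hα₀ hα
  have hαgap : M - b < α * (m' - m) := (div_lt_iff₀ (sub_pos.2 hmm')).1 hα
  obtain ⟨x, hx, hxmax⟩ := hS.exists_sSup_image_eq hne (f := fun x => f x - α * g x)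
    (by fun_prop)
  rw [hxmax]
  have hpen : α * m ≤ α * g x := mul_le_mul_of_nonneg_left (hm x hx) hα₀
  rcases lt_or_ge (f x) b with hfx | hfx
  · linarith
  · have hfM : f x ≤ M := hM ⟨x, hx, rfl⟩
    have : α * m' ≤ α * g x := mul_le_mul_of_nonneg_left (hm' x ⟨hx, hfx⟩) hα₀
    linarith

theorem IsCompact.tendsto_sSup_image_sub_mul_add_sInf (hS : IsCompact S) (hne : S.Nonempty)
    (hf : Continuous f) (hg : Continuous g) :
    Tendsto (fun α => sSup ((fun x => f x - α * g x) '' S) + α * sInf (g '' S)) atTop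
      (𝓝 (sSup (f '' {x | x ∈ S ∧ ∀ y ∈ S, g x ≤ g y}))) :=
  tendsto_order.2
    ⟨fun _ ha => Eventually.of_forall fun α =>
        ha.trans_le (hS.le_sSup_image_sub_mul_add_sInf hne hf hg α),
      fun _ hb => hS.eventually_sSup_image_sub_mul_add_sInf_lt hne hf hg hb⟩

end Penalty

theorem continuous_dotp {d : ℕ} (c : Fin d → ℝ) : Continuous fun w => dotp c w := by
  unfold dotp
  fun_prop

theorem dotp_sub_smul {d : ℕ} (c chat w : Fin d → ℝ) (α : ℝ) :
    dotp (c - α • chat) w = dotp c w - α * dotp chat w := by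
  simp only [dotp, Pi.sub_apply, Pi.smul_apply, smul_eq_mul, sub_mul, Finset.sum_sub_distrib,
    Finset.mul_sum, mul_assoc]

theorem spo_loss_eq_limit_dual_general {d : ℕ} (S : Set (Fin d → ℝ))
    (hS : S.Nonempty) (hSc : IsCompact S)
    (chat c : Fin d → ℝ) :
    Filter.Tendsto (fun α : ℝ => xiS S (c - α • chat) + α * zS S chat - zS S c)
      Filter.atTop (nhds (lSPO S chat c)) := by
  simp only [xiS, zS, lSPO, dotp_sub_smul]
  exact (hSc.tendsto_sSup_image_sub_mul_add_sInf hS (continuous_dotp c)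
    (continuous_dotp chat)).sub_const _

/-- the SPO loss equals the limit of the dual bound as `α → +∞`:
`ℓ_SPO(ĉ, c) = lim_{α → ∞} { ξ_S(c − αĉ) + α z*(ĉ) } − z*(c)`. -/
theorem spo_loss_eq_limit_dual {d : ℕ} (S : Set (Fin d → ℝ))
    (hS : S.Nonempty) (hSc : IsCompact S) (hScv : Convex ℝ S)
    (chat c : Fin d → ℝ) :
    Filter.Tendsto (fun α : ℝ => xiS S (c - α • chat) + α * zS S chat - zS S c)
      Filter.atTop (nhds (lSPO S chat c)) :=
  spo_loss_eq_limit_dual_general S hS hSc chat c
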